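/- In a K_{2,3}-induced-minor-free graph G, for any two vertices u, v, every minimal (u,v)-cutset C of G induces a subgraph whose largest stable (independent) set has size at most two. -/

import Mathlib

/-!
Let `a, b, c` be pairwise non-adjacent vertices of a minimal `(u,v)`-cutset `C`, and let `Ku`, `Kv`
be the components of `G - C` containing `u` and `v`. They are connected, disjoint and have no edge
between them. By minimality each vertex of `C` has a neighbour in `Ku` and one in `Kv`: otherwise
removing it from `C` would still separate `u` from `v`. Hence `Ku`, `Kv`, `{a}`, `{b}`, `{c}` are
the branch sets of an induced `K_{2,3}` minor.
-/

open SimpleGraph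

namespace Paper

variable {V : Type}

/-- `u` and `v` are connected in `G` after deleting the vertex set `B`. -/
def ConnOutside (G : SimpleGraph V) (B : Set V) (u v : V) : Prop :=
  ∃ (hu : u ∈ Bᶜ) (hv : v ∈ Bᶜ), (G.induce Bᶜ).Reachable ⟨u, hu⟩ ⟨v, hv⟩

/-- `C` is an `(a,b)`-cutset of `G`. -/
def IsSep (G : SimpleGraph V) (a b : V) (C : Set V) : Prop :=
  a ∉ C ∧ b ∉ C ∧ ¬ ConnOutside G C a b

/-- `C` is a minimal `(a,b)`-cutset of `G`. -/
def IsMinSep (G : SimpleGraph V) (a b : V) (C : Set V) : Prop :=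
  IsSep G a b C ∧ ∀ C' ⊂ C, ¬ IsSep G a b C'

/-- `S` is a cluster of the layering partition of `G` rooted at `r`, at level `k`:
a maximal set of vertices at distance exactly `k` from `r`, any two of which are
connected in `G` minus the ball of radius `k-1` around `r`. -/
def IsCluster (G : SimpleGraph V) (r : V) (k : ℕ) (S : Set V) : Prop :=
  S.Nonempty ∧ (∀ v ∈ S, G.dist r v = k) ∧
  (∀ u ∈ S, ∀ v ∈ S, ConnOutside G {w | G.dist r w < k} u v) ∧
  ∀ S', S ⊆ S' → (∀ v ∈ S', G.dist r v = k) →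
    (∀ u ∈ S', ∀ v ∈ S', ConnOutside G {w | G.dist r w < k} u v) → S' ⊆ S

/-- The parent set of a cluster `S` at level `k`: vertices at distance `k-1` from `r`
adjacent to some vertex of `S`. -/
def parentSet (G : SimpleGraph V) (r : V) (k : ℕ) (S : Set V) : Set V :=
  {v | G.dist r v = k - 1 ∧ ∃ u ∈ S, G.Adj v u}

/-- `G` has no `K_{2,3}` induced minor. -/
def K23Free (G : SimpleGraph V) : Prop :=
  ¬ ∃ φ : Fin 2 ⊕ Fin 3 → Set V,
      (∀ w, (φ w).Nonempty) ∧ (∀ w, (G.induce (φ w)).Connected) ∧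
      (Pairwise fun a b => Disjoint (φ a) (φ b)) ∧
      (∀ a b, a ≠ b →
        ((completeBipartiteGraph (Fin 2) (Fin 3)).Adj a b ↔
          ∃ u ∈ φ a, ∃ v ∈ φ b, G.Adj u v))

/-- `G` contains a theta as an induced subgraph. -/
def HasTheta (G : SimpleGraph V) : Prop :=
  ∃ (a b : V) (p₁ p₂ p₃ : G.Walk a b),
    p₁.IsPath ∧ p₂.IsPath ∧ p₃.IsPath ∧
    2 ≤ p₁.length ∧ 2 ≤ p₂.length ∧ 2 ≤ p₃.length ∧
    (∀ v, v ∈ p₁.support → v ∈ p₂.support → v = a ∨ v = b) ∧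
    (∀ v, v ∈ p₁.support → v ∈ p₃.support → v = a ∨ v = b) ∧
    (∀ v, v ∈ p₂.support → v ∈ p₃.support → v = a ∨ v = b) ∧
    ∀ u v, u ∈ p₁.support ++ p₂.support ++ p₃.support →
      v ∈ p₁.support ++ p₂.support ++ p₃.support →
      (G.Adj u v ↔ s(u, v) ∈ p₁.edges ++ p₂.edges ++ p₃.edges)

/-- `G` contains a pyramid as an induced subgraph. -/
def HasPyramid (G : SimpleGraph V) : Prop :=
  ∃ (a b₁ b₂ b₃ : V) (p₁ : G.Walk a b₁) (p₂ : G.Walk a b₂) (p₃ : G.Walk a b₃),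
    p₁.IsPath ∧ p₂.IsPath ∧ p₃.IsPath ∧
    G.Adj b₁ b₂ ∧ G.Adj b₂ b₃ ∧ G.Adj b₁ b₃ ∧
    1 ≤ p₁.length ∧ 1 ≤ p₂.length ∧ 1 ≤ p₃.length ∧
    ((2 ≤ p₁.length ∧ 2 ≤ p₂.length) ∨ (2 ≤ p₁.length ∧ 2 ≤ p₃.length) ∨
      (2 ≤ p₂.length ∧ 2 ≤ p₃.length)) ∧
    (∀ v, v ∈ p₁.support → v ∈ p₂.support → v = a) ∧
    (∀ v, v ∈ p₁.support → v ∈ p₃.support → v = a) ∧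
    (∀ v, v ∈ p₂.support → v ∈ p₃.support → v = a) ∧
    ∀ u v, u ∈ p₁.support ++ p₂.support ++ p₃.support →
      v ∈ p₁.support ++ p₂.support ++ p₃.support →
      (G.Adj u v ↔ s(u, v) ∈ p₁.edges ++ p₂.edges ++ p₃.edges ∨
        s(u, v) ∈ [s(b₁, b₂), s(b₂, b₃), s(b₁, b₃)])

/-- The common part of the definition of an (induced) prism in `G`. -/
def PrismWitness (G : SimpleGraph V) (a₁ a₂ a₃ b₁ b₂ b₃ : V)
    (p₁ : G.Walk a₁ b₁) (p₂ : G.Walk a₂ b₂) (p₃ : G.Walk a₃ b₃) : Prop :=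
  p₁.IsPath ∧ p₂.IsPath ∧ p₃.IsPath ∧
  G.Adj a₁ a₂ ∧ G.Adj a₂ a₃ ∧ G.Adj a₁ a₃ ∧
  G.Adj b₁ b₂ ∧ G.Adj b₂ b₃ ∧ G.Adj b₁ b₃ ∧
  (∀ v, v ∈ p₁.support → v ∉ p₂.support) ∧
  (∀ v, v ∈ p₁.support → v ∉ p₃.support) ∧
  (∀ v, v ∈ p₂.support → v ∉ p₃.support) ∧
  ∀ u v, u ∈ p₁.support ++ p₂.support ++ p₃.support →
    v ∈ p₁.support ++ p₂.support ++ p₃.support →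
    (G.Adj u v ↔ s(u, v) ∈ p₁.edges ++ p₂.edges ++ p₃.edges ∨
      s(u, v) ∈ [s(a₁, a₂), s(a₂, a₃), s(a₁, a₃), s(b₁, b₂), s(b₂, b₃), s(b₁, b₃)])

/-- `G` contains a prism as an induced subgraph. -/
def HasPrism (G : SimpleGraph V) : Prop :=
  ∃ (a₁ a₂ a₃ b₁ b₂ b₃ : V) (p₁ : G.Walk a₁ b₁) (p₂ : G.Walk a₂ b₂) (p₃ : G.Walk a₃ b₃),
    PrismWitness G a₁ a₂ a₃ b₁ b₂ b₃ p₁ p₂ p₃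

/-- `G` contains a long prism (at least one path of length ≥ 2) as an induced subgraph. -/
def HasLongPrism (G : SimpleGraph V) : Prop :=
  ∃ (a₁ a₂ a₃ b₁ b₂ b₃ : V) (p₁ : G.Walk a₁ b₁) (p₂ : G.Walk a₂ b₂) (p₃ : G.Walk a₃ b₃),
    PrismWitness G a₁ a₂ a₃ b₁ b₂ b₃ p₁ p₂ p₃ ∧
    (2 ≤ p₁.length ∨ 2 ≤ p₂.length ∨ 2 ≤ p₃.length)

/-- `c` is an induced cycle (hole when length ≥ 4) of `G`. -/
def IsInducedCycle (G : SimpleGraph V) {v : V} (c : G.Walk v v) : Prop :=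
  c.IsCycle ∧ ∀ x ∈ c.support, ∀ y ∈ c.support, (G.Adj x y ↔ s(x, y) ∈ c.edges)

/-- `p` is an induced path of `G`. -/
def IsInducedPath (G : SimpleGraph V) {a b : V} (p : G.Walk a b) : Prop :=
  p.IsPath ∧ ∀ u ∈ p.support, ∀ v ∈ p.support, (G.Adj u v ↔ s(u, v) ∈ p.edges)

/-- `G` contains a wheel: a hole together with a vertex having ≥ 3 neighbours on it. -/
def HasWheel (G : SimpleGraph V) : Prop :=
  ∃ (v x : V) (c : G.Walk v v), IsInducedCycle G c ∧ 4 ≤ c.length ∧ x ∉ c.support ∧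
    ∃ y₁ y₂ y₃, y₁ ≠ y₂ ∧ y₁ ≠ y₃ ∧ y₂ ≠ y₃ ∧
      y₁ ∈ c.support ∧ y₂ ∈ c.support ∧ y₃ ∈ c.support ∧
      G.Adj x y₁ ∧ G.Adj x y₂ ∧ G.Adj x y₃

/-- A sector of a wheel with rim `c` and centre `x`: a path contained in the rim whose
end-vertices are neighbours of `x` and whose internal vertices are not. -/
def IsSector (G : SimpleGraph V) {v : V} (c : G.Walk v v) (x : V) {s t : V}
    (q : G.Walk s t) : Prop :=
  q.IsPath ∧ (∀ e ∈ q.edges, e ∈ c.edges) ∧ G.Adj x s ∧ G.Adj x t ∧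
  ∀ w ∈ q.support, w ≠ s → w ≠ t → ¬ G.Adj x w

/-- `G` contains a broken wheel: a wheel with at least two sectors of length ≥ 2. -/
def HasBrokenWheel (G : SimpleGraph V) : Prop :=
  ∃ (v x : V) (c : G.Walk v v), IsInducedCycle G c ∧ 4 ≤ c.length ∧ x ∉ c.support ∧
    (∃ y₁ y₂ y₃, y₁ ≠ y₂ ∧ y₁ ≠ y₃ ∧ y₂ ≠ y₃ ∧
      y₁ ∈ c.support ∧ y₂ ∈ c.support ∧ y₃ ∈ c.support ∧
      G.Adj x y₁ ∧ G.Adj x y₂ ∧ G.Adj x y₃) ∧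
    ∃ (s₁ t₁ s₂ t₂ : V) (q₁ : G.Walk s₁ t₁) (q₂ : G.Walk s₂ t₂),
      IsSector G c x q₁ ∧ IsSector G c x q₂ ∧ 2 ≤ q₁.length ∧ 2 ≤ q₂.length ∧
      ∀ w, w ∈ q₁.support → w ∈ q₂.support → G.Adj x w

/-- A universally signable graph: no theta, pyramid, prism, or wheel induced subgraph. -/
def UniversallySignable (G : SimpleGraph V) : Prop :=
  ¬ HasTheta G ∧ ¬ HasPyramid G ∧ ¬ HasPrism G ∧ ¬ HasWheel G

/-- `G` has tree-width at most `w`. -/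
def TreewidthLe (G : SimpleGraph V) (w : ℕ) : Prop :=
  ∃ (ι : Type) (T : SimpleGraph ι) (bag : ι → Set V),
    T.IsTree ∧
    (∀ v, ∃ i, v ∈ bag i) ∧
    (∀ u v, G.Adj u v → ∃ i, u ∈ bag i ∧ v ∈ bag i) ∧
    (∀ v, (T.induce {i | v ∈ bag i}).Connected) ∧
    (∀ i, (bag i).ncard ≤ w + 1)

/-- The strong isometric path complexity of `G` is at most `s`: for every vertex `v`,
every isometric path of `G` can be vertex-covered by at most `s` isometric paths
rooted at `v`. -/
def SipcoLe (G : SimpleGraph V) (s : ℕ) : Prop :=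
  ∀ v : V, ∀ ⦃x y : V⦄ (p : G.Walk x y), p.length = G.dist x y →
    ∃ n : ℕ, n ≤ s ∧ ∃ (e : Fin n → V) (Q : ∀ i, G.Walk v (e i)),
      (∀ i, (Q i).length = G.dist v (e i)) ∧
      ∀ z ∈ p.support, ∃ i, z ∈ (Q i).support

/-- The strong isometric path complexity of `G`. -/
noncomputable def sipco (G : SimpleGraph V) : ℕ := sInf {s | SipcoLe G s}

/-- `P` induces exactly two connected components `C₁`, `C₂` in `G`. -/
def SplitsTwo (G : SimpleGraph V) (P C₁ C₂ : Set V) : Prop :=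
  C₁ ∪ C₂ = P ∧ Disjoint C₁ C₂ ∧ C₁.Nonempty ∧ C₂.Nonempty ∧
  (G.induce C₁).Connected ∧ (G.induce C₂).Connected ∧
  ∀ u ∈ C₁, ∀ v ∈ C₂, ¬ G.Adj u v

/-- The star of edges joining each vertex of `D` to `w`. -/
def starEdges (w : V) (D : Set V) : Set (Sym2 V) := {e | ∃ v ∈ D, e = s(v, w)}

/-- Vertices of `S` with a `G`-neighbour in `C`. -/
def Dset (G : SimpleGraph V) (S C : Set V) : Set V := {u ∈ S | ∃ v ∈ C, G.Adj u v}

/-- Admissible edge sets `E` produced by Algorithm 1 when processing a cluster `S`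
with parent set `P`. -/
def ClusterEdges (G : SimpleGraph V) (S P : Set V) (E : Set (Sym2 V)) : Prop :=
  ((G.induce P).Connected ∧ ∃ w ∈ P, E = starEdges w S) ∨
  ∃ C₁ C₂, SplitsTwo G P C₁ C₂ ∧ ∃ w₁ ∈ C₁, ∃ w₂ ∈ C₂,
    ((Dset G S C₁ ∩ Dset G S C₂ = ∅ ∧
       ((¬ (∃ u ∈ Dset G S C₁, ∃ v ∈ Dset G S C₂, G.Adj u v) ∧
          E = starEdges w₁ (Dset G S C₁) ∪ starEdges w₂ (Dset G S C₂)) ∨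
        (∃ u ∈ Dset G S C₁, ∃ v ∈ Dset G S C₂, G.Adj u v ∧
          E = starEdges w₁ (Dset G S C₁) ∪ starEdges w₂ (Dset G S C₂) ∪ {s(u, v)})))
     ∨
     ((Dset G S C₁ ∩ Dset G S C₂).Nonempty ∧
       ∃ u ∈ Dset G S C₁ ∩ Dset G S C₂,
         E = starEdges w₁ (Dset G S C₁) ∪
             starEdges w₂ (Dset G S C₂ \ Dset G S C₁) ∪ {s(u, w₂)}))

/-- `H` is a possible output of the cluster-rewiring algorithm (Algorithm 1) on `(G, r)`. -/
def IsAlgoOutput (G : SimpleGraph V) (r : V) (H : SimpleGraph V) : Prop :=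
  ∃ f : Set V → Set (Sym2 V),
    (∀ S k, 1 ≤ k → IsCluster G r k S → ClusterEdges G S (parentSet G r k S) (f S)) ∧
    H.edgeSet = ⋃ S ∈ {S : Set V | ∃ k, 1 ≤ k ∧ IsCluster G r k S}, f S

/-- The type of clusters of the layering partition of `G` rooted at `r`. -/
def ClusterType (G : SimpleGraph V) (r : V) : Type := {S : Set V // ∃ k, IsCluster G r k S}

/-- The layering tree: clusters, adjacent when `G` has an edge between them. -/
def layeringTree (G : SimpleGraph V) (r : V) : SimpleGraph (ClusterType G r) :=
  SimpleGraph.fromRel (fun S T => ∃ u ∈ S.1, ∃ v ∈ T.1, G.Adj u v)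

/-- `A` is a connected component of `G - C`. -/
def IsCompOf (G : SimpleGraph V) (C A : Set V) : Prop :=
  A.Nonempty ∧ Disjoint A C ∧ (G.induce A).Connected ∧
  ∀ u ∈ A, ∀ v, v ∉ A → v ∉ C → ¬ G.Adj u v

section ConnOutside

variable {G : SimpleGraph V} {B : Set V} {u v w : V}

lemma ConnOutside.refl (hu : u ∉ B) : ConnOutside G B u u := ⟨hu, hu, .rfl⟩

lemma ConnOutside.symm (h : ConnOutside G B u v) : ConnOutside G B v u := by
  obtain ⟨hu, hv, huv⟩ := h
  exact ⟨hv, hu, huv.symm⟩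

lemma ConnOutside.trans (huv : ConnOutside G B u v) (hvw : ConnOutside G B v w) :
    ConnOutside G B u w := by
  obtain ⟨hu, _, huv⟩ := huv
  obtain ⟨_, hw, hvw⟩ := hvw
  exact ⟨hu, hw, huv.trans hvw⟩

lemma ConnOutside.notMem_right (h : ConnOutside G B u v) : v ∉ B := by
  obtain ⟨-, hv, -⟩ := h
  exact hv

lemma connOutside_of_adj (hu : u ∉ B) (hv : v ∉ B) (huv : G.Adj u v) : ConnOutside G B u v :=
  ⟨hu, hv, (induce_adj.mpr huv).reachable⟩

lemma connOutside_iff_exists_walk :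
    ConnOutside G B u v ↔ ∃ p : G.Walk u v, ∀ x ∈ p.support, x ∉ B := by
  constructor
  · rintro ⟨_, _, ⟨q⟩⟩
    refine ⟨q.map (Embedding.induce Bᶜ).toHom, fun x hx => ?_⟩
    -- `hx` mentions the endpoints as `↑⟨u, _⟩`, `↑⟨v, _⟩`; restate it so `support_map` applies
    replace hx : x ∈ (q.map (Embedding.induce Bᶜ).toHom).support := hx
    rw [Walk.support_map, List.mem_map] at hx
    obtain ⟨⟨y, hy⟩, -, rfl⟩ := hx
    exact hy
  · rintro ⟨p, hp⟩
    exact ⟨hp u p.start_mem_support, hp v p.end_mem_support, ⟨p.induce Bᶜ hp⟩⟩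

lemma connected_induce_connOutside (hu : u ∉ B) :
    (G.induce {w | ConnOutside G B u w}).Connected := by
  classical
  refine induce_connected_of_patches u (.refl hu) fun {w} hw => ?_
  obtain ⟨p, hp⟩ := connOutside_iff_exists_walk.mp hw
  have hprefix : {x | x ∈ p.support} ⊆ {w | ConnOutside G B u w} := fun x hx =>
    connOutside_iff_exists_walk.mpr
      ⟨p.takeUntil x hx, fun y hy => hp y (p.support_takeUntil_subset_support hx hy)⟩
  exact ⟨_, hprefix, p.start_mem_support, p.end_mem_support,
    p.connected_induce_support.preconnected _ _⟩

/-- `z` is the first vertex of `B` on the walk and `y` its predecessor. -/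
lemma exists_connOutside_adj_of_walk (p : G.Walk u w) (hu : u ∉ B) (hp : ∃ z ∈ p.support, z ∈ B) :
    ∃ y z, z ∈ p.support ∧ z ∈ B ∧ G.Adj y z ∧ ConnOutside G B u y := by
  induction p with
  | nil =>
    obtain ⟨z, hz, hzB⟩ := hp
    exact absurd ((List.mem_singleton.mp hz) ▸ hzB) hu
  | @cons u u' w huu' q ih =>
    by_cases hu' : u' ∈ B
    · exact ⟨u, u', by simp, hu', huu', .refl hu⟩
    obtain ⟨z, hz, hzB⟩ := hp
    have hzq : z ∈ q.support := by
      rcases List.mem_cons.mp hz with rfl | hz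
      · exact absurd hzB hu
      · exact hz
    obtain ⟨y, z, hz, hzB, hyz, hu'y⟩ := ih hu' ⟨z, hzq, hzB⟩
    exact ⟨y, z, List.mem_cons_of_mem _ hz, hzB, hyz, (connOutside_of_adj hu hu' huu').trans hu'y⟩

end ConnOutside

section Separators

variable {G : SimpleGraph V} {u v : V} {C : Set V}

lemma IsSep.symm (hC : IsSep G u v C) : IsSep G v u C :=
  ⟨hC.2.1, hC.1, fun h => hC.2.2 h.symm⟩

lemma IsMinSep.symm (hC : IsMinSep G u v C) : IsMinSep G v u C :=
  ⟨hC.1.symm, fun C' hC' hsep => hC.2 C' hC' hsep.symm⟩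

lemma IsSep.disjoint (hC : IsSep G u v C) :
    Disjoint {x | ConnOutside G C u x} {y | ConnOutside G C v y} :=
  Set.disjoint_left.mpr fun _ hux hvx => hC.2.2 (hux.trans hvx.symm)

lemma IsSep.not_adj (hC : IsSep G u v C) {x y : V} (hux : ConnOutside G C u x)
    (hvy : ConnOutside G C v y) : ¬ G.Adj x y := fun hxy =>
  hC.2.2 ((hux.trans (connOutside_of_adj hux.notMem_right hvy.notMem_right hxy)).trans hvy.symm)

/-- Minimality: `C \ {x}` no longer separates, and a walk avoiding it must enter `C` at `x`. -/
lemma IsMinSep.exists_adj (hC : IsMinSep G u v C) {x : V} (hx : x ∈ C) :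
    ∃ y, ConnOutside G C u y ∧ G.Adj y x := by
  obtain ⟨⟨hu, hv, hsep⟩, hmin⟩ := hC
  have hconn : ConnOutside G (C \ {x}) u v := by
    by_contra h
    exact hmin _ (Set.sdiff_singleton_ssubset.mpr hx) ⟨fun h => hu h.1, fun h => hv h.1, h⟩
  obtain ⟨p, hp⟩ := connOutside_iff_exists_walk.mp hconn
  have hmeets : ∃ z ∈ p.support, z ∈ C := by
    by_contra! h
    exact hsep (connOutside_iff_exists_walk.mpr ⟨p, h⟩)
  obtain ⟨y, z, hz, hzC, hyz, huy⟩ := exists_connOutside_adj_of_walk p hu hmeets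
  obtain rfl : z = x := by
    by_contra hzx
    exact hp z hz ⟨hzC, hzx⟩
  exact ⟨y, huy, hyz⟩

end Separators

lemma not_k23Free_of_model {G : SimpleGraph V} (X Y : Set V) (f : Fin 3 ↪ V)
    (hX : (G.induce X).Connected) (hY : (G.induce Y).Connected) (hXY : Disjoint X Y)
    (hXYadj : ∀ x ∈ X, ∀ y ∈ Y, ¬ G.Adj x y) (hfX : ∀ j, f j ∉ X) (hfY : ∀ j, f j ∉ Y)
    (hf : ∀ j j', ¬ G.Adj (f j) (f j')) (hXf : ∀ j, ∃ x ∈ X, G.Adj x (f j))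
    (hYf : ∀ j, ∃ y ∈ Y, G.Adj y (f j)) : ¬ K23Free G := by
  have side_connected : ∀ i, (G.induce (![X, Y] i)).Connected := by
    intro i; fin_cases i <;> assumption
  have side_disjoint : ∀ i i', i ≠ i' → Disjoint (![X, Y] i) (![X, Y] i') := by
    intro i i' h; fin_cases i <;> fin_cases i' <;> simp_all [hXY.symm]
  have side_not_adj : ∀ i i', ∀ x ∈ ![X, Y] i, ∀ y ∈ ![X, Y] i', i ≠ i' → ¬ G.Adj x y := by
    intro i i' x hx y hy h
    fin_cases i <;> fin_cases i'
    · exact absurd rfl h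
    · exact hXYadj x hx y hy
    · exact fun hxy => hXYadj y hy x hx hxy.symm
    · exact absurd rfl h
  have side_not_mem : ∀ i j, f j ∉ ![X, Y] i := by
    intro i j; fin_cases i <;> simp [hfX, hfY]
  have side_adj : ∀ i j, ∃ x ∈ ![X, Y] i, G.Adj x (f j) := by
    intro i j; fin_cases i <;> simp [hXf, hYf]
  refine fun hG => hG ⟨Sum.elim ![X, Y] fun j => {f j}, ?_, ?_, ?_, ?_⟩
  · rintro (i | j)
    · exact (side_connected i).nonempty.elim fun x => ⟨x, x.2⟩
    · exact Set.singleton_nonempty _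
  · rintro (i | j)
    · exact side_connected i
    · exact (show (G.induce {f j}).Connected from .of_subsingleton)
  · rintro (i | j) (i' | j') h
    · exact side_disjoint i i' fun h' => h (congrArg _ h')
    · exact Set.disjoint_singleton_right.mpr (side_not_mem i j')
    · exact Set.disjoint_singleton_left.mpr (side_not_mem i' j)
    · exact Set.disjoint_singleton.mpr (f.injective.ne fun h' => h (congrArg _ h'))
  · rintro (i | j) (i' | j') h
    · simpa using fun x hx y hy => side_not_adj i i' x hx y hy fun h' => h (congrArg _ h')
    · simpa using side_adj i j'
    · simpa [G.adj_comm] using side_adj i' j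
    · simpa using hf j j'

lemma exists_embedding_fin_of_le_ncard {A : Set V} {n : ℕ} (hA : n ≤ A.ncard) :
    ∃ f : Fin n ↪ V, ∀ j, f j ∈ A := by
  obtain rfl | hn := n.eq_zero_or_pos
  · exact ⟨Function.Embedding.ofIsEmpty, fun j => j.elim0⟩
  have : Fintype A := (Set.finite_of_ncard_pos (hn.trans_le hA)).fintype
  obtain ⟨g⟩ := Function.Embedding.nonempty_of_card_le (α := Fin n) (β := A)
    (by rwa [Fintype.card_fin, Set.fintypeCard_eq_ncard])
  exact ⟨g.trans (Function.Embedding.subtype _), fun j => (g j).2⟩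

theorem stmt2_general {V : Type} (G : SimpleGraph V) (hG : K23Free G)
    (u v : V) (C : Set V) (hC : IsMinSep G u v C)
    (A : Set V) (hA : A ⊆ C) (hstable : ∀ x ∈ A, ∀ y ∈ A, ¬ G.Adj x y) :
    A.ncard ≤ 2 := by
  by_contra! hA3
  obtain ⟨f, hfA⟩ := exists_embedding_fin_of_le_ncard (n := 3) hA3
  have hfC : ∀ j, f j ∈ C := fun j => hA (hfA j)
  have hsep : IsSep G u v C := hC.1
  exact not_k23Free_of_model {x | ConnOutside G C u x} {y | ConnOutside G C v y} f
    (connected_induce_connOutside hsep.1) (connected_induce_connOutside hsep.2.1)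
    hsep.disjoint (fun _ hx _ hy => hsep.not_adj hx hy)
    (fun j h => h.notMem_right (hfC j)) (fun j h => h.notMem_right (hfC j))
    (fun j j' => hstable _ (hfA j) _ (hfA j'))
    (fun j => hC.exists_adj (hfC j)) (fun j => hC.symm.exists_adj (hfC j)) hG

theorem stmt2 {V : Type} [Fintype V] (G : SimpleGraph V) (hG : K23Free G)
    (u v : V) (C : Set V) (hC : IsMinSep G u v C)
    (A : Set V) (hA : A ⊆ C) (hstable : ∀ x ∈ A, ∀ y ∈ A, ¬ G.Adj x y) :
    A.ncard ≤ 2 :=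
  stmt2_general G hG u v C hC A hA hstable

end Paper
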